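/- For all real numbers q1 and q2, the equinoctial frame vectors form a right-handed triad: e_X × e_Y = e_Z, e_Y × e_Z = e_X, and e_Z × e_X = e_Y, where × denotes the cross product in ℝ³. -/

import Mathlib

open RealInnerProductSpace

noncomputable def eqX (q1 q2 : ℝ) : EuclideanSpace ℝ (Fin 3) :=
  (1 / (1 + q1 ^ 2 + q2 ^ 2)) •
    (WithLp.equiv 2 (Fin 3 → ℝ)).symm ![1 - q1 ^ 2 + q2 ^ 2, 2 * q1 * q2, -2 * q1]

noncomputable def eqY (q1 q2 : ℝ) : EuclideanSpace ℝ (Fin 3) :=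
  (1 / (1 + q1 ^ 2 + q2 ^ 2)) •
    (WithLp.equiv 2 (Fin 3 → ℝ)).symm ![2 * q1 * q2, 1 + q1 ^ 2 - q2 ^ 2, 2 * q2]

noncomputable def eqZ (q1 q2 : ℝ) : EuclideanSpace ℝ (Fin 3) :=
  (1 / (1 + q1 ^ 2 + q2 ^ 2)) •
    (WithLp.equiv 2 (Fin 3 → ℝ)).symm ![2 * q1, -2 * q2, 1 - q1 ^ 2 - q2 ^ 2]


/-- The standard cross product on ℝ³ (`EuclideanSpace ℝ (Fin 3)`). -/
noncomputable def cross3 (u w : EuclideanSpace ℝ (Fin 3)) : EuclideanSpace ℝ (Fin 3) :=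
  (WithLp.equiv 2 (Fin 3 → ℝ)).symm
    (crossProduct ((WithLp.equiv 2 (Fin 3 → ℝ)) u) ((WithLp.equiv 2 (Fin 3 → ℝ)) w))

set_option maxHeartbeats 2000000 in
/-- The equinoctial frame vectors form a right-handed triad. -/
theorem stmt_1 (q1 q2 : ℝ) :
    cross3 (eqX q1 q2) (eqY q1 q2) = eqZ q1 q2 ∧
    cross3 (eqY q1 q2) (eqZ q1 q2) = eqX q1 q2 ∧
    cross3 (eqZ q1 q2) (eqX q1 q2) = eqY q1 q2 := by
  have h : (1 + q1 ^ 2 + q2 ^ 2) ≠ 0 := by positivity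
  refine ⟨?_, ?_, ?_⟩ <;>
  · ext i
    fin_cases i <;>
    · simp only [cross3, eqX, eqY, eqZ, crossProduct, WithLp.equiv_symm_apply, WithLp.ofLp_toLp,
        WithLp.equiv_apply, WithLp.ofLp_smul, Pi.smul_apply, PiLp.smul_apply, smul_eq_mul, LinearMap.mk₂_apply,
        Matrix.cons_val_zero, Matrix.cons_val_one, Matrix.head_cons, Matrix.cons_val_two,
        Matrix.tail_cons, Fin.isValue, Fin.reduceFinMk]
      field_simp
      ring
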